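/- Let 0 ≤ p < 1 and let ρ^(p) = (1−p)·(I/4) + p·ψψᴴ be the two-qubit isotropic state, where ψ (i,k) = (1/√2) if i = k and 0 otherwise, and I is the 4×4 identity. Then for every n ≥ 1 there exist no completely positive trace-preserving linear maps Φ (from matrices indexed by (Fin n → Fin 2) to 2×2 matrices) and Ψ (from matrices indexed by (Fin n → Fin 2) to 2×2 matrices) such that (Φ ⊗ Ψ)((ρ^(p))^{⊗n}) = ψψᴴ; that is, a maximally entangled two-qubit state cannot be distilled from copies of ρ^(p) by local operations without communication. -/

import Mathlib

open Matrix
open scoped Kronecker ComplexOrder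

noncomputable section

/-- Apply the super-operators `Φ` and `Ψ` to the two tensor factors of a bipartite matrix:
`(Φ ⊗ Ψ)(M)`. -/
def applyAB {α β α' β' : Type*} (Φ : Matrix α α ℂ →ₗ[ℂ] Matrix α' α' ℂ)
    (Ψ : Matrix β β ℂ →ₗ[ℂ] Matrix β' β' ℂ)
    (M : Matrix (α × β) (α × β) ℂ) : Matrix (α' × β') (α' × β') ℂ :=
  Matrix.of fun p q =>
    Ψ (Matrix.of fun b b' => Φ (Matrix.of fun a a' => M (a, b) (a', b')) p.1 q.1) p.2 q.2

/-- A super-operator is completely positive and trace-preserving if its Choi matrix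
`Σ_{k,l} E_{kl} ⊗ Φ(E_{kl})` is positive semidefinite and it preserves traces. -/
def IsCPTP {α α' : Type*} [Fintype α] [DecidableEq α] [Fintype α']
    (Φ : Matrix α α ℂ →ₗ[ℂ] Matrix α' α' ℂ) : Prop :=
  (Matrix.of fun (p q : α × α') =>
      Φ (Matrix.single p.1 q.1 1) p.2 q.2).PosSemidef ∧
  ∀ M : Matrix α α ℂ, (Φ M).trace = M.trace

/-- The n-fold tensor power of a bipartite matrix, indexed by
`(Fin n → Fin dA) × (Fin n → Fin dB)`. -/
def tensorPow {dA dB : ℕ} (ρ : Matrix (Fin dA × Fin dB) (Fin dA × Fin dB) ℂ) (n : ℕ) :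
    Matrix ((Fin n → Fin dA) × (Fin n → Fin dB)) ((Fin n → Fin dA) × (Fin n → Fin dB)) ℂ :=
  Matrix.of fun p q => ∏ t, ρ (p.1 t, p.2 t) (q.1 t, q.2 t)

/-- The two-qubit Bell state `ψψᴴ` with `ψ (i,k) = 1/√2` if `i = k` and `0` otherwise. -/
def bell : Matrix (Fin 2 × Fin 2) (Fin 2 × Fin 2) ℂ :=
  Matrix.of fun x y =>
    (if x.1 = x.2 then (1 / Real.sqrt 2 : ℂ) else 0) *
      star (if y.1 = y.2 then (1 / Real.sqrt 2 : ℂ) else 0)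



section Aux
set_option linter.unusedSectionVars false
set_option maxHeartbeats 1000000

lemma star_ite' (c : Prop) [Decidable c] (a b : ℂ) :
    star (if c then a else b) = if c then star a else star b := apply_ite star c a b

lemma posSemidef_sum {n ι : Type*} [Fintype n] (s : Finset ι) (f : ι → Matrix n n ℂ)
    (h : ∀ i ∈ s, (f i).PosSemidef) : (∑ i ∈ s, f i).PosSemidef := by
  classical
  induction s using Finset.induction with
  | empty => simpa using (Matrix.PosSemidef.zero (n := n) (R := ℂ))
  | @insert a s ha ih =>
    rw [Finset.sum_insert ha]
    exact (h _ (Finset.mem_insert_self _ _)).add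
      (ih fun i hi => h i (Finset.mem_insert_of_mem hi))

lemma posSemidef_iff_eq_transpose_mul_self {n : Type*} [Fintype n] {M : Matrix n n ℂ} :
    M.PosSemidef ↔ ∃ B : Matrix n n ℂ, M = Bᴴ * B := by
  classical
  open scoped MatrixOrder Matrix.Norms.L2Operator in
  refine ⟨fun h => ?_, fun ⟨B, hB⟩ => hB ▸ posSemidef_conjTranspose_mul_self B⟩
  open scoped MatrixOrder Matrix.Norms.L2Operator in
  obtain ⟨B, hB⟩ := CStarAlgebra.nonneg_iff_eq_star_mul_self.mp (nonneg_iff_posSemidef.mpr h)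
  exact ⟨B, hB⟩

section Kraus
variable {α α' : Type*} [Fintype α] [DecidableEq α] [Fintype α'] [DecidableEq α']

lemma sum3_comm {ι κ γ : Type*} [Fintype ι] [Fintype κ] [Fintype γ] (f : ι → κ → γ → ℂ) :
    (∑ k, ∑ l, ∑ i, f k l i) = ∑ i, ∑ k, ∑ l, f k l i :=
  (Finset.sum_congr rfl fun _ _ => Finset.sum_comm).trans Finset.sum_comm

lemma kraus_exists (Φ : Matrix α α ℂ →ₗ[ℂ] Matrix α' α' ℂ)
    (hΦ : (Matrix.of fun (p q : α × α') =>
      Φ (Matrix.single p.1 q.1 1) p.2 q.2).PosSemidef) :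
    ∃ K : (α × α') → Matrix α' α ℂ, ∀ X, Φ X = ∑ i, K i * X * (K i)ᴴ := by
  obtain ⟨C, hC⟩ := posSemidef_iff_eq_transpose_mul_self.mp hΦ
  refine ⟨fun i => Matrix.of fun p k => star (C i (k, p)), fun X => ?_⟩
  have hE : ∀ (k l : α) (p q : α'), Φ (single k l 1) p q
      = ∑ i, star (C i (k, p)) * C i (l, q) := by
    intro k l p q
    have h := congrFun (congrFun hC (k, p)) (l, q)
    simpa [Matrix.mul_apply, Matrix.conjTranspose_apply] using h
  ext p q
  have hX : Φ X = ∑ k, ∑ l, X k l • Φ (single k l 1) := by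
    conv_lhs => rw [matrix_eq_sum_single X]
    rw [map_sum]
    refine Finset.sum_congr rfl fun k _ => ?_
    rw [map_sum]
    refine Finset.sum_congr rfl fun l _ => ?_
    have h1 : single k l (X k l) = X k l • single k l (1 : ℂ) := by
      rw [smul_single, smul_eq_mul, mul_one]
    rw [h1, _root_.map_smul]
  rw [hX]
  simp only [Matrix.sum_apply, Matrix.smul_apply, hE, smul_eq_mul, Finset.mul_sum]
  rw [sum3_comm]
  refine Finset.sum_congr rfl fun i _ => ?_
  simp only [Matrix.mul_apply, Matrix.conjTranspose_apply, Matrix.of_apply, Finset.sum_mul]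
  rw [Finset.sum_comm]
  refine Finset.sum_congr rfl fun k _ => Finset.sum_congr rfl fun l _ => ?_
  simp only [star_star]
  ring


end Kraus

section CP
variable {α α' β : Type*} [Fintype α] [DecidableEq α] [Fintype α'] [DecidableEq α']
  [Fintype β] [DecidableEq β]

lemma cp_left (Φ : Matrix α α ℂ →ₗ[ℂ] Matrix α' α' ℂ)
    (hΦ : (Matrix.of fun (p q : α × α') =>
      Φ (Matrix.single p.1 q.1 1) p.2 q.2).PosSemidef)
    (M : Matrix (α × β) (α × β) ℂ) (hM : M.PosSemidef) :
    (Matrix.of fun (p q : α' × β) =>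
      Φ (Matrix.of fun a a' => M (a, p.2) (a', q.2)) p.1 q.1).PosSemidef := by
  obtain ⟨K, hK⟩ := kraus_exists Φ hΦ
  have key : (Matrix.of fun (p q : α' × β) =>
      Φ (Matrix.of fun a a' => M (a, p.2) (a', q.2)) p.1 q.1)
      = ∑ i, (Matrix.of fun (pc : α' × β) (kc : α × β) =>
          K i pc.1 kc.1 * (if pc.2 = kc.2 then (1:ℂ) else 0)) * M *
          (Matrix.of fun (pc : α' × β) (kc : α × β) =>
          K i pc.1 kc.1 * (if pc.2 = kc.2 then (1:ℂ) else 0))ᴴ := by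
    ext ⟨p, b⟩ ⟨q, b'⟩
    rw [Matrix.of_apply, hK]
    simp only [Matrix.sum_apply, Matrix.mul_apply, Matrix.conjTranspose_apply,
      Matrix.of_apply, Fintype.sum_prod_type, Finset.sum_mul, Finset.mul_sum,
      star_mul', star_ite', star_one, star_zero, mul_ite, ite_mul, one_mul, mul_one,
      zero_mul, mul_zero, Finset.sum_ite_eq, Finset.sum_ite_eq', Finset.sum_ite_irrel, Finset.sum_const_zero, Finset.mem_univ,
      if_true]
    try (refine Finset.sum_congr rfl fun i _ => Finset.sum_congr rfl fun l _ =>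
      Finset.sum_congr rfl fun k _ => by ring)
  rw [key]
  exact posSemidef_sum _ _ fun i _ => hM.mul_mul_conjTranspose_same _

lemma cp_right (Ψ : Matrix β β ℂ →ₗ[ℂ] Matrix α' α' ℂ)
    (hΨ : (Matrix.of fun (p q : β × α') =>
      Ψ (Matrix.single p.1 q.1 1) p.2 q.2).PosSemidef)
    (M : Matrix (α × β) (α × β) ℂ) (hM : M.PosSemidef) :
    (Matrix.of fun (p q : α × α') =>
      Ψ (Matrix.of fun b b' => M (p.1, b) (q.1, b')) p.2 q.2).PosSemidef := by
  obtain ⟨K, hK⟩ := kraus_exists Ψ hΨ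
  have key : (Matrix.of fun (p q : α × α') =>
      Ψ (Matrix.of fun b b' => M (p.1, b) (q.1, b')) p.2 q.2)
      = ∑ i, (Matrix.of fun (pc : α × α') (kc : α × β) =>
          (if pc.1 = kc.1 then (1:ℂ) else 0) * K i pc.2 kc.2) * M *
          (Matrix.of fun (pc : α × α') (kc : α × β) =>
          (if pc.1 = kc.1 then (1:ℂ) else 0) * K i pc.2 kc.2)ᴴ := by
    ext ⟨p, r⟩ ⟨q, s⟩
    rw [Matrix.of_apply, hK]
    simp only [Matrix.sum_apply, Matrix.mul_apply, Matrix.conjTranspose_apply,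
      Matrix.of_apply, Fintype.sum_prod_type, Finset.sum_mul, Finset.mul_sum,
      star_mul', star_ite', star_one, star_zero, mul_ite, ite_mul, one_mul, mul_one,
      zero_mul, mul_zero, Finset.sum_ite_eq, Finset.sum_ite_eq', Finset.sum_ite_irrel, Finset.sum_const_zero, Finset.mem_univ,
      if_true]
    try (refine Finset.sum_congr rfl fun i _ => Finset.sum_congr rfl fun l _ =>
      Finset.sum_congr rfl fun k _ => by ring)
  rw [key]
  exact posSemidef_sum _ _ fun i _ => hM.mul_mul_conjTranspose_same _

end CP

section ApplyAB
variable {α β α' β' : Type*} [Fintype α] [DecidableEq α] [Fintype α'] [DecidableEq α']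
  [Fintype β] [DecidableEq β] [Fintype β'] [DecidableEq β']
  (Φ : Matrix α α ℂ →ₗ[ℂ] Matrix α' α' ℂ) (Ψ : Matrix β β ℂ →ₗ[ℂ] Matrix β' β' ℂ)

lemma applyAB_posSemidef
    (hΦ : (Matrix.of fun (p q : α × α') =>
      Φ (Matrix.single p.1 q.1 1) p.2 q.2).PosSemidef)
    (hΨ : (Matrix.of fun (p q : β × β') =>
      Ψ (Matrix.single p.1 q.1 1) p.2 q.2).PosSemidef)
    (M : Matrix (α × β) (α × β) ℂ) (hM : M.PosSemidef) :
    (applyAB Φ Ψ M).PosSemidef := by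
  have h1 := cp_left Φ hΦ M hM
  have h2 := cp_right Ψ hΨ _ h1
  have h3 : applyAB Φ Ψ M = Matrix.of fun (p q : α' × β') =>
      Ψ (Matrix.of fun b b' => (Matrix.of fun (u v : α' × β) =>
        Φ (Matrix.of fun a a' => M (a, u.2) (a', v.2)) u.1 v.1) (p.1, b) (q.1, b')) p.2 q.2 := by
    ext ⟨pa, pb⟩ ⟨qa, qb⟩
    rfl
  rw [h3]
  exact h2

lemma applyAB_sub_smul (c : ℂ) (A B : Matrix (α × β) (α × β) ℂ) :
    applyAB Φ Ψ (A - c • B) = applyAB Φ Ψ A - c • applyAB Φ Ψ B := by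
  have h1 : ∀ b b' : β, (Matrix.of fun a a' => (A - c • B) ((a, b)) ((a', b')))
      = (Matrix.of fun a a' => A (a, b) (a', b')) -
        c • (Matrix.of fun a a' => B (a, b) (a', b')) := by
    intro b b'; ext a a'
    simp [Matrix.sub_apply, Matrix.smul_apply]
  have h2 : ∀ pa qa : α', (Matrix.of fun b b' =>
        Φ (Matrix.of fun a a' => (A - c • B) ((a, b)) ((a', b'))) pa qa)
      = (Matrix.of fun b b' => Φ (Matrix.of fun a a' => A (a, b) (a', b')) pa qa) -
        c • (Matrix.of fun b b' => Φ (Matrix.of fun a a' => B (a, b) (a', b')) pa qa) := by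
    intro pa qa
    ext b b'
    show Φ (Matrix.of fun a a' => (A - c • B) ((a, b)) ((a', b'))) pa qa = _
    rw [h1 b b', map_sub, _root_.map_smul]
    simp [Matrix.sub_apply, Matrix.smul_apply]
  ext ⟨pa, pb⟩ ⟨qa, qb⟩
  show Ψ (Matrix.of fun b b' =>
      Φ (Matrix.of fun a a' => (A - c • B) ((a, b)) ((a', b'))) pa qa) pb qb = _
  rw [h2 pa qa, map_sub, _root_.map_smul]
  simp [applyAB, Matrix.sub_apply, Matrix.smul_apply]

lemma applyAB_one :
    applyAB Φ Ψ (1 : Matrix (α × β) (α × β) ℂ)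
      = Matrix.of fun (p q : α' × β') => Φ 1 p.1 q.1 * Ψ 1 p.2 q.2 := by
  have h1 : ∀ pa qa : α', (Matrix.of fun b b' =>
        Φ (Matrix.of fun a a' => (1 : Matrix (α × β) (α × β) ℂ) ((a, b)) ((a', b'))) pa qa)
      = (Φ 1 pa qa) • (1 : Matrix β β ℂ) := by
    intro pa qa
    ext b b'
    show Φ (Matrix.of fun a a' => (1 : Matrix (α × β) (α × β) ℂ) ((a, b)) ((a', b'))) pa qa = _
    have h2 : (Matrix.of fun a a' => (1 : Matrix (α × β) (α × β) ℂ) ((a, b)) ((a', b')))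
        = (if b = b' then (1 : ℂ) else 0) • (1 : Matrix α α ℂ) := by
      ext a a'
      by_cases h : b = b' <;> by_cases h2 : a = a' <;>
        simp [Matrix.one_apply, h, h2, Prod.ext_iff]
    rw [h2, _root_.map_smul]
    by_cases h : b = b' <;> simp [Matrix.one_apply, h]
  ext ⟨pa, pb⟩ ⟨qa, qb⟩
  show Ψ (Matrix.of fun b b' =>
      Φ (Matrix.of fun a a' => (1 : Matrix (α × β) (α × β) ℂ) ((a, b)) ((a', b'))) pa qa) pb qb = _
  rw [h1 pa qa, _root_.map_smul]
  simp [smul_eq_mul]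

end ApplyAB

lemma tensorFamily_posSemidef {n dA dB : ℕ}
    (μ : Fin n → Matrix (Fin dA × Fin dB) (Fin dA × Fin dB) ℂ)
    (hμ : ∀ t, (μ t).PosSemidef) :
    (Matrix.of fun (x y : (Fin n → Fin dA) × (Fin n → Fin dB)) =>
      ∏ t, μ t (x.1 t, x.2 t) (y.1 t, y.2 t)).PosSemidef := by
  choose B hB using fun t => posSemidef_iff_eq_transpose_mul_self.mp (hμ t)
  have key : (Matrix.of fun (x y : (Fin n → Fin dA) × (Fin n → Fin dB)) =>
      ∏ t, μ t (x.1 t, x.2 t) (y.1 t, y.2 t))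
      = (Matrix.of fun (r : Fin n → Fin dA × Fin dB)
          (x : (Fin n → Fin dA) × (Fin n → Fin dB)) =>
          ∏ t, B t (r t) (x.1 t, x.2 t))ᴴ *
        (Matrix.of fun (r : Fin n → Fin dA × Fin dB)
          (x : (Fin n → Fin dA) × (Fin n → Fin dB)) =>
          ∏ t, B t (r t) (x.1 t, x.2 t)) := by
    ext x y
    rw [Matrix.of_apply, Matrix.mul_apply]
    simp only [Matrix.conjTranspose_apply, Matrix.of_apply, star_prod]
    calc ∏ t, μ t (x.1 t, x.2 t) (y.1 t, y.2 t)
        = ∏ t, ∑ g, star (B t g (x.1 t, x.2 t)) * B t g (y.1 t, y.2 t) := by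
          refine Finset.prod_congr rfl fun t _ => ?_
          rw [hB t, Matrix.mul_apply]
          simp [Matrix.conjTranspose_apply]
      _ = ∑ r : Fin n → Fin dA × Fin dB,
            ∏ t, star (B t (r t) (x.1 t, x.2 t)) * B t (r t) (y.1 t, y.2 t) :=
          Fintype.prod_sum _
      _ = ∑ r : Fin n → Fin dA × Fin dB,
            (∏ t, star (B t (r t) (x.1 t, x.2 t))) * ∏ t, B t (r t) (y.1 t, y.2 t) := by
          refine Finset.sum_congr rfl fun r _ => ?_
          rw [Finset.prod_mul_distrib]
  rw [key]
  exact posSemidef_conjTranspose_mul_self _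

lemma tensorPow_sub_posSemidef {n : ℕ} {dA dB : ℕ}
    (ρ σ : Matrix (Fin dA × Fin dB) (Fin dA × Fin dB) ℂ)
    (hρ : ρ.PosSemidef) (hσ : σ.PosSemidef) (hd : (ρ - σ).PosSemidef) :
    (tensorPow ρ n - tensorPow σ n).PosSemidef := by
  set F : ℕ → Matrix ((Fin n → Fin dA) × (Fin n → Fin dB))
      ((Fin n → Fin dA) × (Fin n → Fin dB)) ℂ :=
    fun k => Matrix.of fun x y =>
      ∏ t : Fin n, (if (t : ℕ) < k then ρ else σ) (x.1 t, x.2 t) (y.1 t, y.2 t) with hF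
  have hFn : F n = tensorPow ρ n := by
    ext x y
    simp only [hF, tensorPow, Matrix.of_apply]
    exact Finset.prod_congr rfl fun t _ => by rw [if_pos t.isLt]
  have hF0 : F 0 = tensorPow σ n := by
    ext x y
    simp only [hF, tensorPow, Matrix.of_apply]
    exact Finset.prod_congr rfl fun t _ => by rw [if_neg (Nat.not_lt_zero _)]
  have htel : tensorPow ρ n - tensorPow σ n = ∑ k ∈ Finset.range n, (F (k+1) - F k) := by
    rw [Finset.sum_range_sub, hFn, hF0]
  rw [htel]
  refine posSemidef_sum _ _ fun k hk => ?_
  rw [Finset.mem_range] at hk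
  have key : F (k+1) - F k = Matrix.of fun (x y : (Fin n → Fin dA) × (Fin n → Fin dB)) =>
      ∏ t : Fin n, (if (t : ℕ) < k then ρ else if (t : ℕ) = k then ρ - σ else σ)
        (x.1 t, x.2 t) (y.1 t, y.2 t) := by
    ext x y
    set t₀ : Fin n := ⟨k, hk⟩
    have hcongr : ∀ (A D : Matrix (Fin dA × Fin dB) (Fin dA × Fin dB) ℂ),
        (∏ t ∈ Finset.univ.erase t₀,
          (if (t : ℕ) < k then ρ else if (t : ℕ) = k then A else σ)
            (x.1 t, x.2 t) (y.1 t, y.2 t))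
        = ∏ t ∈ Finset.univ.erase t₀,
          (if (t : ℕ) < k then ρ else if (t : ℕ) = k then D else σ)
            (x.1 t, x.2 t) (y.1 t, y.2 t) := by
      intro A D
      refine Finset.prod_congr rfl fun t ht => ?_
      have hne : (t : ℕ) ≠ k := fun h => (Finset.mem_erase.mp ht).1 (Fin.ext h)
      by_cases h : (t : ℕ) < k <;> simp [h, hne]
    have expand : ∀ (A : Matrix (Fin dA × Fin dB) (Fin dA × Fin dB) ℂ),
        (∏ t : Fin n, (if (t : ℕ) < k then ρ else if (t : ℕ) = k then A else σ)
          (x.1 t, x.2 t) (y.1 t, y.2 t))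
        = A (x.1 t₀, x.2 t₀) (y.1 t₀, y.2 t₀) *
          ∏ t ∈ Finset.univ.erase t₀,
            (if (t : ℕ) < k then ρ else if (t : ℕ) = k then ρ - σ else σ)
              (x.1 t, x.2 t) (y.1 t, y.2 t) := by
      intro A
      rw [← Finset.mul_prod_erase Finset.univ _ (Finset.mem_univ t₀), hcongr A (ρ - σ)]
      congr 1
      have : ¬ ((t₀ : ℕ) < k) := lt_irrefl k
      simp [this, show (t₀ : ℕ) = k from rfl]
    have e1 : F (k+1) x y = ρ (x.1 t₀, x.2 t₀) (y.1 t₀, y.2 t₀) *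
        ∏ t ∈ Finset.univ.erase t₀,
          (if (t : ℕ) < k then ρ else if (t : ℕ) = k then ρ - σ else σ)
            (x.1 t, x.2 t) (y.1 t, y.2 t) := by
      have : F (k+1) x y = ∏ t : Fin n, (if (t : ℕ) < k then ρ else
          if (t : ℕ) = k then ρ else σ) (x.1 t, x.2 t) (y.1 t, y.2 t) := by
        simp only [hF, Matrix.of_apply]
        refine Finset.prod_congr rfl fun t _ => ?_
        rcases lt_trichotomy (t : ℕ) k with h | h | h
        · simp [h, Nat.lt_succ_of_lt h]
        · simp [h, Nat.lt_irrefl, Nat.lt_succ_self]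
        · have h1 : ¬ ((t : ℕ) < k + 1) := by omega
          have h2 : ¬ ((t : ℕ) < k) := by omega
          have h3 : (t : ℕ) ≠ k := by omega
          simp [h1, h2, h3]
      rw [this, expand ρ]
    have e0 : F k x y = σ (x.1 t₀, x.2 t₀) (y.1 t₀, y.2 t₀) *
        ∏ t ∈ Finset.univ.erase t₀,
          (if (t : ℕ) < k then ρ else if (t : ℕ) = k then ρ - σ else σ)
            (x.1 t, x.2 t) (y.1 t, y.2 t) := by
      have : F k x y = ∏ t : Fin n, (if (t : ℕ) < k then ρ else
          if (t : ℕ) = k then σ else σ) (x.1 t, x.2 t) (y.1 t, y.2 t) := by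
        simp only [hF, Matrix.of_apply]
        refine Finset.prod_congr rfl fun t _ => ?_
        by_cases h : (t : ℕ) < k
        · simp [h]
        · by_cases h2 : (t : ℕ) = k <;> simp [h, h2]
      rw [this, expand σ]
    have e2 := expand (ρ - σ)
    rw [Matrix.sub_apply, e1, e0, Matrix.of_apply, e2, Matrix.sub_apply, sub_mul]
  rw [key]
  refine tensorFamily_posSemidef _ fun t => ?_
  by_cases h : (t : ℕ) < k
  · simp only [h, if_true]; exact hρ
  · by_cases h2 : (t : ℕ) = k
    · simpa [h2] using hd
    · simp only [h, h2, if_false]; exact hσ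

lemma bell_posSemidef : bell.PosSemidef := by
  have key : bell = (Matrix.of fun (z y : Fin 2 × Fin 2) =>
      if z = ((0 : Fin 2), (0 : Fin 2)) then
        star (if y.1 = y.2 then (1 / Real.sqrt 2 : ℂ) else 0) else 0)ᴴ *
      (Matrix.of fun (z y : Fin 2 × Fin 2) =>
      if z = ((0 : Fin 2), (0 : Fin 2)) then
        star (if y.1 = y.2 then (1 / Real.sqrt 2 : ℂ) else 0) else 0) := by
    ext x y
    rw [Matrix.mul_apply]
    simp [Matrix.conjTranspose_apply, star_ite', Finset.sum_ite_eq, bell]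
  rw [key]
  exact posSemidef_conjTranspose_mul_self _

lemma smul_posSemidef {ι : Type*} [Fintype ι] {M : Matrix ι ι ℂ} (hM : M.PosSemidef)
    {r : ℝ} (hr : 0 ≤ r) : ((r : ℂ) • M).PosSemidef := by
  obtain ⟨B, rfl⟩ := posSemidef_iff_eq_transpose_mul_self.mp hM
  have key : (r : ℂ) • (Bᴴ * B) = ((Real.sqrt r : ℂ) • B)ᴴ * ((Real.sqrt r : ℂ) • B) := by
    rw [Matrix.conjTranspose_smul, Matrix.smul_mul, Matrix.mul_smul, smul_smul]
    congr 1
    rw [Complex.star_def, Complex.conj_ofReal, ← Complex.ofReal_mul, Real.mul_self_sqrt hr]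
  rw [key]
  exact posSemidef_conjTranspose_mul_self _

lemma psd_diag_nonneg {ι : Type*} [Fintype ι] [DecidableEq ι] {W : Matrix ι ι ℂ}
    (hW : W.PosSemidef) (u : ι) : 0 ≤ W u u := by
  have h := hW.dotProduct_mulVec_nonneg (Pi.single u 1)
  simpa [dotProduct, mulVec, Pi.single_apply, mul_ite, ite_mul, star_ite',
    Finset.sum_ite_eq, Finset.sum_ite_eq'] using h

lemma psd_offdiag_zero {ι : Type*} [Fintype ι] {W : Matrix ι ι ℂ}
    (hW : W.PosSemidef) {j : ι} (h : W j j = 0) (i : ι) : W i j = 0 := by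
  obtain ⟨B, rfl⟩ := posSemidef_iff_eq_transpose_mul_self.mp hW
  rw [Matrix.mul_apply] at h ⊢
  simp only [Matrix.conjTranspose_apply] at h ⊢
  have hterm : ∀ k ∈ Finset.univ, star (B k j) * B k j = 0 :=
    (Finset.sum_eq_zero_iff_of_nonneg fun k _ => star_mul_self_nonneg (B k j)).mp h
  have hzero : ∀ k, B k j = 0 := fun k => by
    have := hterm k (Finset.mem_univ k)
    exact (CStarRing.star_mul_self_eq_zero_iff (B k j)).mp this
  exact Finset.sum_eq_zero fun k _ => by rw [hzero k, mul_zero]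

lemma quad_two {W : Matrix (Fin 2 × Fin 2) (Fin 2 × Fin 2) ℂ} (hW : W.PosSemidef) :
    0 ≤ W ((0 : Fin 2), (0 : Fin 2)) ((0 : Fin 2), (0 : Fin 2))
      - W ((0 : Fin 2), (0 : Fin 2)) ((1 : Fin 2), (1 : Fin 2))
      - W ((1 : Fin 2), (1 : Fin 2)) ((0 : Fin 2), (0 : Fin 2))
      + W ((1 : Fin 2), (1 : Fin 2)) ((1 : Fin 2), (1 : Fin 2)) := by
  have h := hW.dotProduct_mulVec_nonneg (fun w => if w = ((0 : Fin 2), (0 : Fin 2)) then 1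
    else if w = ((1 : Fin 2), (1 : Fin 2)) then (-1 : ℂ) else 0)
  have e : (dotProduct (star (fun w => if w = ((0 : Fin 2), (0 : Fin 2)) then 1
      else if w = ((1 : Fin 2), (1 : Fin 2)) then (-1 : ℂ) else 0))
      (W *ᵥ (fun w => if w = ((0 : Fin 2), (0 : Fin 2)) then 1
      else if w = ((1 : Fin 2), (1 : Fin 2)) then (-1 : ℂ) else 0)))
      = W ((0 : Fin 2), (0 : Fin 2)) ((0 : Fin 2), (0 : Fin 2))
      - W ((0 : Fin 2), (0 : Fin 2)) ((1 : Fin 2), (1 : Fin 2))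
      - W ((1 : Fin 2), (1 : Fin 2)) ((0 : Fin 2), (0 : Fin 2))
      + W ((1 : Fin 2), (1 : Fin 2)) ((1 : Fin 2), (1 : Fin 2)) := by
    simp only [dotProduct, mulVec, Pi.star_apply, star_ite', star_one, star_neg, star_zero,
      Fintype.sum_prod_type, Fin.sum_univ_two, mul_ite, ite_mul, one_mul, mul_one,
      neg_mul, mul_neg, zero_mul, mul_zero, Prod.mk.injEq]
    norm_num
    ring
  rw [e] at h
  exact h

end Aux

set_option maxHeartbeats 1000000 in
/-- A maximally entangled two-qubit state cannot be distilled from copies of the isotropic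
state `ρ^(p)` (`p < 1`) by local CPTP operations without communication. -/
theorem no_entanglement_distillation (p : ℝ) (hp0 : 0 ≤ p) (hp1 : p < 1) (n : ℕ)
    (hn : 1 ≤ n) :
    ¬ ∃ (Φ : Matrix (Fin n → Fin 2) (Fin n → Fin 2) ℂ →ₗ[ℂ] Matrix (Fin 2) (Fin 2) ℂ)
        (Ψ : Matrix (Fin n → Fin 2) (Fin n → Fin 2) ℂ →ₗ[ℂ] Matrix (Fin 2) (Fin 2) ℂ),
      IsCPTP Φ ∧ IsCPTP Ψ ∧
      applyAB Φ Ψ (tensorPow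
        (((1 - p) / 4 : ℂ) • (1 : Matrix (Fin 2 × Fin 2) (Fin 2 × Fin 2) ℂ) +
          (p : ℂ) • bell) n) = bell := by
  rintro ⟨Φ, Ψ, ⟨hΦC, hΦT⟩, ⟨hΨC, hΨT⟩, heq⟩
  set ρ : Matrix (Fin 2 × Fin 2) (Fin 2 × Fin 2) ℂ :=
    ((1 - p) / 4 : ℂ) • (1 : Matrix (Fin 2 × Fin 2) (Fin 2 × Fin 2) ℂ) + (p : ℂ) • bell
    with hρdef
  set c' : ℝ := (1 - p) / 4 with hc'
  have hc'pos : 0 < c' := by rw [hc']; linarith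
  have hcast : ((1 - p) / 4 : ℂ) = ((c' : ℝ) : ℂ) := by rw [hc']; push_cast; ring
  -- basic PSD facts
  have hbell := bell_posSemidef
  have hone : (1 : Matrix (Fin 2 × Fin 2) (Fin 2 × Fin 2) ℂ).PosSemidef :=
    Matrix.PosSemidef.one
  have hc1 : (((c' : ℝ) : ℂ) • (1 : Matrix (Fin 2 × Fin 2) (Fin 2 × Fin 2) ℂ)).PosSemidef :=
    smul_posSemidef hone hc'pos.le
  have hpb : ((p : ℂ) • bell).PosSemidef := smul_posSemidef hbell hp0
  have hρpsd : ρ.PosSemidef := by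
    rw [hρdef, hcast]
    exact hc1.add hpb
  have hdiff : ρ - ((c' : ℝ) : ℂ) • (1 : Matrix (Fin 2 × Fin 2) (Fin 2 × Fin 2) ℂ)
      = (p : ℂ) • bell := by
    rw [hρdef, hcast, add_sub_cancel_left]
  have hpow := tensorPow_sub_posSemidef (n := n) ρ
    (((c' : ℝ) : ℂ) • (1 : Matrix (Fin 2 × Fin 2) (Fin 2 × Fin 2) ℂ))
    hρpsd hc1 (by rw [hdiff]; exact hpb)
  -- tensorPow of scaled identity
  have hpow1 : tensorPow (((c' : ℝ) : ℂ) • (1 : Matrix (Fin 2 × Fin 2) (Fin 2 × Fin 2) ℂ)) n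
      = ((c' ^ n : ℝ) : ℂ) • (1 : Matrix ((Fin n → Fin 2) × (Fin n → Fin 2))
          ((Fin n → Fin 2) × (Fin n → Fin 2)) ℂ) := by
    ext x y
    simp only [tensorPow, Matrix.of_apply, Matrix.smul_apply, Matrix.one_apply, smul_eq_mul]
    by_cases hxy : x = y
    · subst hxy
      simp [Finset.prod_const, Complex.ofReal_pow]
    · have hne : ∃ t : Fin n, (x.1 t, x.2 t) ≠ (y.1 t, y.2 t) := by
        by_contra hall
        push_neg at hall
        have hall2 : ∀ t, x.1 t = y.1 t ∧ x.2 t = y.2 t := fun t =>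
          Prod.mk.injEq _ _ _ _ ▸ hall t
        exact hxy (Prod.ext (funext fun t => (hall2 t).1) (funext fun t => (hall2 t).2))
      obtain ⟨t₀, ht₀⟩ := hne
      rw [if_neg hxy, mul_zero]
      apply Finset.prod_eq_zero (Finset.mem_univ t₀)
      rw [if_neg ht₀, mul_zero]
  have hpow2 : (tensorPow ρ n - ((c' ^ n : ℝ) : ℂ) • 1).PosSemidef := by
    rw [← hpow1]; exact hpow
  have happ := applyAB_posSemidef Φ Ψ hΦC hΨC _ hpow2
  rw [applyAB_sub_smul, heq, applyAB_one] at happ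
  set σ : Matrix (Fin 2) (Fin 2) ℂ := Φ 1 with hσdef
  set τ : Matrix (Fin 2) (Fin 2) ℂ := Ψ 1 with hτdef
  -- σ and τ are PSD
  have hσpsd : σ.PosSemidef := by
    obtain ⟨K, hK⟩ := kraus_exists Φ hΦC
    rw [hσdef, hK]
    exact posSemidef_sum _ _ fun i _ => Matrix.PosSemidef.one.mul_mul_conjTranspose_same _
  have hτpsd : τ.PosSemidef := by
    obtain ⟨K, hK⟩ := kraus_exists Ψ hΨC
    rw [hτdef, hK]
    exact posSemidef_sum _ _ fun i _ => Matrix.PosSemidef.one.mul_mul_conjTranspose_same _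
  -- traces
  have hcard : (Fintype.card (Fin n → Fin 2) : ℂ) = (2 ^ n : ℂ) := by
    rw [Fintype.card_fun]
    push_cast
    simp
  have htσ : σ 0 0 + σ 1 1 = (2 ^ n : ℂ) := by
    have h := hΦT 1
    rw [Matrix.trace_one] at h
    calc σ 0 0 + σ 1 1 = σ.trace := (Matrix.trace_fin_two σ).symm
      _ = (2 ^ n : ℂ) := by rw [hσdef, h, hcard]
  have htτ : τ 0 0 + τ 1 1 = (2 ^ n : ℂ) := by
    have h := hΨT 1
    rw [Matrix.trace_one] at h
    calc τ 0 0 + τ 1 1 = τ.trace := (Matrix.trace_fin_two τ).symm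
      _ = (2 ^ n : ℂ) := by rw [hτdef, h, hcard]
  -- key vanishing products
  set cn : ℝ := c' ^ n with hcn
  have hcnpos : 0 < cn := pow_pos hc'pos n
  have hcnC : (0 : ℂ) < (cn : ℂ) := by rw [Complex.zero_lt_real]; exact hcnpos
  have hW : ∀ a b c d : Fin 2,
      (bell - (cn : ℂ) • Matrix.of fun (p q : Fin 2 × Fin 2) => σ p.1 q.1 * τ p.2 q.2)
        ((a, b)) ((c, d)) = bell ((a, b)) ((c, d)) - (cn : ℂ) * (σ a c * τ b d) := by
    intro a b c d
    simp [Matrix.sub_apply, Matrix.smul_apply]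
  have hk1 : σ 0 0 * τ 1 1 = 0 := by
    have h01 := psd_diag_nonneg happ ((0 : Fin 2), (1 : Fin 2))
    rw [hW 0 1 0 1] at h01
    have hb01 : bell ((0 : Fin 2), (1 : Fin 2)) ((0 : Fin 2), (1 : Fin 2)) = 0 := by
      simp [bell]
    rw [hb01, zero_sub, neg_nonneg] at h01
    have hge : 0 ≤ σ 0 0 * τ 1 1 :=
      mul_nonneg (psd_diag_nonneg hσpsd 0) (psd_diag_nonneg hτpsd 1)
    have hge2 : 0 ≤ (cn : ℂ) * (σ 0 0 * τ 1 1) := mul_nonneg hcnC.le hge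
    rcases mul_eq_zero.mp (le_antisymm h01 hge2) with h | h
    · exact absurd h (by exact_mod_cast hcnpos.ne')
    · exact h
  have hk2 : σ 1 1 * τ 0 0 = 0 := by
    have h10 := psd_diag_nonneg happ ((1 : Fin 2), (0 : Fin 2))
    rw [hW 1 0 1 0] at h10
    have hb10 : bell ((1 : Fin 2), (0 : Fin 2)) ((1 : Fin 2), (0 : Fin 2)) = 0 := by
      simp [bell]
    rw [hb10, zero_sub, neg_nonneg] at h10
    have hge : 0 ≤ σ 1 1 * τ 0 0 :=
      mul_nonneg (psd_diag_nonneg hσpsd 1) (psd_diag_nonneg hτpsd 0)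
    have hge2 : 0 ≤ (cn : ℂ) * (σ 1 1 * τ 0 0) := mul_nonneg hcnC.le hge
    rcases mul_eq_zero.mp (le_antisymm h10 hge2) with h | h
    · exact absurd h (by exact_mod_cast hcnpos.ne')
    · exact h
  -- the four bell corner entries coincide
  have hbc : ∀ a c : Fin 2, bell ((a, a)) ((c, c))
      = (1 / Real.sqrt 2 : ℂ) * star (1 / Real.sqrt 2 : ℂ) := by
    intro a c; simp [bell]
  have hq := quad_two happ
  rw [hW 0 0 0 0, hW 0 0 1 1, hW 1 1 0 0, hW 1 1 1 1, hbc 0 0, hbc 0 1, hbc 1 0, hbc 1 1] at hq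
  have hq' : 0 ≤ -((cn : ℂ) * (σ 0 0 * τ 0 0 - σ 0 1 * τ 0 1 - σ 1 0 * τ 1 0
      + σ 1 1 * τ 1 1)) := by
    calc (0 : ℂ) ≤ _ := hq
      _ = -((cn : ℂ) * (σ 0 0 * τ 0 0 - σ 0 1 * τ 0 1 - σ 1 0 * τ 1 0
          + σ 1 1 * τ 1 1)) := by ring
  rw [neg_nonneg] at hq'
  have h2n : ((2 : ℂ) ^ n) ≠ 0 := pow_ne_zero n two_ne_zero
  have hfinal : ∀ E : ℂ, E = (2 ^ n : ℂ) * (2 ^ n : ℂ) → ¬ ((cn : ℂ) * E ≤ 0) := by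
    intro E hE hle
    rw [hE] at hle
    have : ((cn * (2 ^ n * 2 ^ n) : ℝ) : ℂ) ≤ ((0 : ℝ) : ℂ) := by push_cast; simpa using hle
    rw [Complex.real_le_real] at this
    have hp2 : (0 : ℝ) < 2 ^ n := pow_pos two_pos n
    have := mul_pos hcnpos (mul_pos hp2 hp2)
    linarith
  rcases mul_eq_zero.mp hk1 with hσ00 | hτ11
  · rcases mul_eq_zero.mp hk2 with hσ11 | hτ00
    · rw [hσ00, hσ11, add_zero] at htσ
      exact h2n (by rw [← htσ])
    · -- σ 0 0 = 0, τ 0 0 = 0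
      have hσ10 : σ 1 0 = 0 := psd_offdiag_zero hσpsd hσ00 1
      have hσ01 : σ 0 1 = 0 := by
        rw [← hσpsd.1, Matrix.conjTranspose_apply, hσ10, star_zero]
      have hτ10 : τ 1 0 = 0 := psd_offdiag_zero hτpsd hτ00 1
      have hτ01 : τ 0 1 = 0 := by
        rw [← hτpsd.1, Matrix.conjTranspose_apply, hτ10, star_zero]
      have hσ11 : σ 1 1 = (2 ^ n : ℂ) := by rw [← htσ, hσ00, zero_add]
      have hτ11 : τ 1 1 = (2 ^ n : ℂ) := by rw [← htτ, hτ00, zero_add]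
      refine hfinal (σ 0 0 * τ 0 0 - σ 0 1 * τ 0 1 - σ 1 0 * τ 1 0 + σ 1 1 * τ 1 1)
        ?_ hq'
      rw [hσ00, hτ00, hσ01, hτ01, hσ10, hτ10, hσ11, hτ11]; ring
  · rcases mul_eq_zero.mp hk2 with hσ11 | hτ00
    · -- σ 1 1 = 0, τ 1 1 = 0
      have hσ01 : σ 0 1 = 0 := psd_offdiag_zero hσpsd hσ11 0
      have hσ10 : σ 1 0 = 0 := by
        rw [← hσpsd.1, Matrix.conjTranspose_apply, hσ01, star_zero]
      have hτ01 : τ 0 1 = 0 := psd_offdiag_zero hτpsd hτ11 0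
      have hτ10 : τ 1 0 = 0 := by
        rw [← hτpsd.1, Matrix.conjTranspose_apply, hτ01, star_zero]
      have hσ00 : σ 0 0 = (2 ^ n : ℂ) := by rw [← htσ, hσ11, add_zero]
      have hτ00 : τ 0 0 = (2 ^ n : ℂ) := by rw [← htτ, hτ11, add_zero]
      refine hfinal (σ 0 0 * τ 0 0 - σ 0 1 * τ 0 1 - σ 1 0 * τ 1 0 + σ 1 1 * τ 1 1) ?_ hq'
      rw [hσ00, hτ00, hσ01, hτ01, hσ10, hτ10, hσ11, hτ11]; ring
    · rw [hτ11, hτ00, add_zero] at htτ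
      exact h2n (by rw [← htτ])



end
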